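/- arXiv:2407.04521 — 6 statements merged into one kernel-verified Lean document; each statement's English description precedes it below -/
import Mathlib

section
/- Let b ∈ ℝ, σ, Γ ∈ ℝ, η > 0, λ > 0, γ > 0 and T ∈ ℝ, and set c := σ² + ηΓ² (assumed c > 0) and ρ := b²/c. Define A(t) := −λ·exp(ρ(t−T)), C(t) := 1, and D(t) := (γρ/4)(t−T)² − (t−T)(γ/2)·log(πγ/(cλ)) + (1/(4λ))·exp(−ρ(t−T)) − 1/(4λ). Then A(T) = −λ, C(T) = 1, D(T) = 0, and for every t ∈ ℝ the functions are differentiable with A′(t) = ρ·A(t), C′(t) = 0, and D′(t) = ρ·C(t)²/(4A(t)) − (γ/2)·log(πγ/(−c·A(t))); in particular −c·A(t) > 0 so the logarithm is well defined. (This is the paper's explicit solution of the ODE system arising from the exploratory HJB equation of the mean-variance problem.) -/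
open Real

/-! Along `A(t) = -λ e^{ρ(t-T)}` the argument of the
logarithm is `πγ/(cλ) · e^{-ρ(t-T)}`, so `log(πγ/(-cA))` is affine in `t`, and
`ρ/(4A) = -(ρ/(4λ)) e^{-ρ(t-T)}`; together these are exactly the derivative of the
quadratic-plus-exponential `D`. -/

lemma hasDerivAt_exp_mul_sub (k T t : ℝ) :
    HasDerivAt (fun s => exp (k * (s - T))) (k * exp (k * (t - T))) t := by
  have h := (((hasDerivAt_id t).sub_const T).const_mul k).exp
  simpa [mul_comm] using h

lemma log_div_mul_exp {x y : ℝ} (hx : x ≠ 0) (hy : y ≠ 0) (s : ℝ) :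
    log (x / (y * exp s)) = log (x / y) - s := by
  rw [← div_div, log_div (div_ne_zero hx hy) (exp_pos s).ne', log_exp]

lemma hasDerivAt_quadratic_sub_linear_add_exp (α β κ ρ T t : ℝ) :
    HasDerivAt (fun s => α * (s - T) ^ 2 - (s - T) * β + κ * exp (-ρ * (s - T)) - κ)
      (2 * α * (t - T) - β - κ * ρ * exp (-ρ * (t - T))) t := by
  have hsq : HasDerivAt (fun s => (s - T) ^ 2) (2 * (t - T)) t := by
    simpa using ((hasDerivAt_id t).sub_const T).fun_pow 2
  have hlin : HasDerivAt (fun s => (s - T) * β) β t := by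
    simpa using ((hasDerivAt_id t).sub_const T).mul_const β
  exact ((((hsq.const_mul α).sub hlin).add
    ((hasDerivAt_exp_mul_sub (-ρ) T t).const_mul κ)).sub_const κ).congr_deriv (by ring)

theorem mean_variance_ODE_solution_general (lam γ T : ℝ)
    (hlam : 0 < lam) (hγ : 0 < γ)
    (c ρ : ℝ) (hc : 0 < c)
    (A C D : ℝ → ℝ)
    (hA : ∀ t, A t = -lam * Real.exp (ρ * (t - T)))
    (hC : ∀ t, C t = 1)
    (hD : ∀ t, D t = (γ * ρ / 4) * (t - T) ^ 2
        - (t - T) * (γ / 2) * Real.log (Real.pi * γ / (c * lam))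
        + (1 / (4 * lam)) * Real.exp (-ρ * (t - T)) - 1 / (4 * lam)) :
    A T = -lam ∧ C T = 1 ∧ D T = 0 ∧
      ∀ t : ℝ, 0 < -c * A t ∧
        HasDerivAt A (ρ * A t) t ∧ HasDerivAt C 0 t ∧
        HasDerivAt D (ρ * (C t) ^ 2 / (4 * A t)
          - (γ / 2) * Real.log (Real.pi * γ / (-c * A t))) t := by
  obtain rfl := funext hA
  obtain rfl := funext hC
  obtain rfl := funext hD
  refine ⟨by simp, rfl, by simp, fun t => ?_⟩
  beta_reduce
  have hneg : -c * (-lam * exp (ρ * (t - T))) = c * lam * exp (ρ * (t - T)) := by ring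
  refine ⟨hneg ▸ by positivity, ?_, hasDerivAt_const t 1, ?_⟩
  · exact ((hasDerivAt_exp_mul_sub ρ T t).const_mul (-lam)).congr_deriv (by ring)
  · have hinv : exp (-ρ * (t - T)) = (exp (ρ * (t - T)))⁻¹ := by
      rw [neg_mul, exp_neg]
    refine ((hasDerivAt_quadratic_sub_linear_add_exp (γ * ρ / 4)
      ((γ / 2) * log (π * γ / (c * lam))) (1 / (4 * lam)) ρ T t).congr_of_eventuallyEq
      (.of_forall fun s => by ring)).congr_deriv ?_
    rw [hneg, log_div_mul_exp (by positivity) (by positivity), hinv]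
    field_simp
    ring

/-- Explicit solution of the ODE system arising from the exploratory HJB equation of the
mean-variance problem: with `c = σ² + ηΓ² > 0`, `ρ = b²/c`,
`A(t) = −λ exp(ρ(t−T))`, `C(t) = 1`, and
`D(t) = (γρ/4)(t−T)² − (t−T)(γ/2) log(πγ/(cλ)) + (1/(4λ)) exp(−ρ(t−T)) − 1/(4λ)`,
we have the terminal conditions and the ODEs `A′ = ρA`, `C′ = 0`,
`D′(t) = ρ C(t)²/(4A(t)) − (γ/2) log(πγ/(−cA(t)))`, with `−cA(t) > 0`. -/
theorem mean_variance_ODE_solution (b σ Γ η lam γ T : ℝ)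
    (hη : 0 < η) (hlam : 0 < lam) (hγ : 0 < γ)
    (c ρ : ℝ) (hcdef : c = σ ^ 2 + η * Γ ^ 2) (hc : 0 < c) (hρ : ρ = b ^ 2 / c)
    (A C D : ℝ → ℝ)
    (hA : ∀ t, A t = -lam * Real.exp (ρ * (t - T)))
    (hC : ∀ t, C t = 1)
    (hD : ∀ t, D t = (γ * ρ / 4) * (t - T) ^ 2
        - (t - T) * (γ / 2) * Real.log (Real.pi * γ / (c * lam))
        + (1 / (4 * lam)) * Real.exp (-ρ * (t - T)) - 1 / (4 * lam)) :
    A T = -lam ∧ C T = 1 ∧ D T = 0 ∧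
      ∀ t : ℝ, 0 < -c * A t ∧
        HasDerivAt A (ρ * A t) t ∧ HasDerivAt C 0 t ∧
        HasDerivAt D (ρ * (C t) ^ 2 / (4 * A t)
          - (γ / 2) * Real.log (Real.pi * γ / (-c * A t))) t :=
  mean_variance_ODE_solution_general lam γ T hlam hγ c ρ hc A C D hA hC hD
end

section
/- Let η > 0, γ > 0, r₀ > 0, σ ∈ ℝ, T ∈ ℝ, and let A and C be the explicit functions A(t) := (1+γ/η)e^{η(t−T)} − γ/η and C(t) := K₁(t−T) + K₂(e^{η(t−T)}−1) + K₃(e^{2η(t−T)}−1) + γ∫_t^T logΓ(((γ+η)/γ)e^{η(s−T)})ds with K₁ := −γ(σ²/(2η)−1), K₂ := −(η+γ)(r₀+γ)/(r₀η) − ((γ+η)/η)log(γ/r₀) + σ²(γ+η)/(2η²), K₃ := (η+γ)²/(2ηr₀). Set B := −A. Then for every t ∈ ℝ, x > 0 and μ̄ > 0, the function s ↦ A(s)·log x + B(s)·log μ̄ + C(s) is differentiable at t with derivative ∂, and the reduced master equation holds: ∂ − σ²A(t)/2 + (γ+ηA(t))·(log(γ/r₀) + log μ̄ − log x) + γ·log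 Γ(1 + ηA(t)/γ) + ηB(t)(γ+ηA(t))/r₀ − ηB(t) = 0. -/
open MeasureTheory Real intervalIntegral

/-- The explicit MFG functions `A`, `B = −A`, `C` satisfy the reduced master equation of the
non-LQ jump-control mean-field game: at every `t`, for `x, μ̄ > 0`, the map
`s ↦ A(s) log x + B(s) log μ̄ + C(s)` is differentiable at `t` with derivative `d` satisfying
`d − σ²A(t)/2 + (γ+ηA(t))(log(γ/r₀) + log μ̄ − log x)
  + γ log Γ(1 + ηA(t)/γ) + ηB(t)(γ+ηA(t))/r₀ − ηB(t) = 0`. -/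
theorem mfg_master_equation (η γ r₀ σ T : ℝ) (hη : 0 < η) (hγ : 0 < γ) (hr : 0 < r₀)
    (A B C : ℝ → ℝ) (K₁ K₂ K₃ : ℝ)
    (hA : ∀ t, A t = (1 + γ / η) * Real.exp (η * (t - T)) - γ / η)
    (hB : ∀ t, B t = -A t)
    (hK₁ : K₁ = -γ * (σ ^ 2 / (2 * η) - 1))
    (hK₂ : K₂ = -((η + γ) * (r₀ + γ)) / (r₀ * η) - ((γ + η) / η) * Real.log (γ / r₀)
        + σ ^ 2 * (γ + η) / (2 * η ^ 2))
    (hK₃ : K₃ = (η + γ) ^ 2 / (2 * η * r₀))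
    (hC : ∀ t, C t = K₁ * (t - T) + K₂ * (Real.exp (η * (t - T)) - 1)
        + K₃ * (Real.exp (2 * η * (t - T)) - 1)
        + γ * ∫ s in t..T, Real.log (Real.Gamma (((γ + η) / γ) * Real.exp (η * (s - T))))) :
    ∀ t x μbar : ℝ, 0 < x → 0 < μbar →
      ∃ d : ℝ,
        HasDerivAt (fun s : ℝ => A s * Real.log x + B s * Real.log μbar + C s) d t ∧
        d - σ ^ 2 * A t / 2
          + (γ + η * A t) * (Real.log (γ / r₀) + Real.log μbar - Real.log x)
          + γ * Real.log (Real.Gamma (1 + η * A t / γ))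
          + η * B t * (γ + η * A t) / r₀ - η * B t = 0 := by
  intro t x μbar hx hμ
  set f : ℝ → ℝ := fun s => Real.log (Real.Gamma (((γ + η) / γ) * Real.exp (η * (s - T)))) with hf
  -- continuity of the integrand
  have hf_cont : Continuous f := by
    rw [continuous_iff_continuousAt]
    intro s
    have hp : 0 < ((γ + η) / γ) * Real.exp (η * (s - T)) := by positivity
    have hΓ : ContinuousAt Real.Gamma (((γ + η) / γ) * Real.exp (η * (s - T))) :=
      (Real.differentiableAt_Gamma (fun m => ne_of_gt
        (lt_of_le_of_lt (by simp : -(m : ℝ) ≤ 0) hp))).continuousAt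
    have hinner : ContinuousAt (fun s : ℝ => ((γ + η) / γ) * Real.exp (η * (s - T))) s := by
      fun_prop
    have h2 : ContinuousAt (fun s : ℝ => Real.Gamma (((γ + η) / γ) * Real.exp (η * (s - T)))) s :=
      ContinuousAt.comp (f := fun s : ℝ => ((γ + η) / γ) * Real.exp (η * (s - T))) hΓ hinner
    exact ContinuousAt.log h2 (ne_of_gt (Real.Gamma_pos_of_pos hp))
  -- derivative of the exponential pieces
  have hE : HasDerivAt (fun s : ℝ => Real.exp (η * (s - T)))
      (Real.exp (η * (t - T)) * η) t := by
    have h1 : HasDerivAt (fun s : ℝ => η * (s - T)) η t := by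
      simpa using ((hasDerivAt_id t).sub_const T).const_mul η
    exact h1.exp
  have hE2 : HasDerivAt (fun s : ℝ => Real.exp (2 * η * (s - T)))
      (Real.exp (2 * η * (t - T)) * (2 * η)) t := by
    have h1 : HasDerivAt (fun s : ℝ => 2 * η * (s - T)) (2 * η) t := by
      simpa using ((hasDerivAt_id t).sub_const T).const_mul (2 * η)
    exact h1.exp
  -- derivative of A
  have hAfun : A = fun s : ℝ => (1 + γ / η) * Real.exp (η * (s - T)) - γ / η := funext hA
  have hA' : HasDerivAt A ((1 + γ / η) * (Real.exp (η * (t - T)) * η)) t := by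
    rw [hAfun]; exact (hE.const_mul _).sub_const _
  have hB' : HasDerivAt B (-((1 + γ / η) * (Real.exp (η * (t - T)) * η))) t := by
    have : B = fun s => -A s := funext hB
    rw [this]; exact hA'.neg
  -- derivative of the integral term
  have hI : HasDerivAt (fun u : ℝ => ∫ s in u..T, f s) (-f t) t :=
    intervalIntegral.integral_hasDerivAt_left (hf_cont.intervalIntegrable t T)
      (hf_cont.stronglyMeasurable.stronglyMeasurableAtFilter) hf_cont.continuousAt
  -- derivative of C
  have hCfun : C = fun s : ℝ => K₁ * (s - T) + K₂ * (Real.exp (η * (s - T)) - 1)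
      + K₃ * (Real.exp (2 * η * (s - T)) - 1) + γ * ∫ u in s..T, f u := funext hC
  have hC' : HasDerivAt C
      (K₁ * 1 + K₂ * (Real.exp (η * (t - T)) * η)
        + K₃ * (Real.exp (2 * η * (t - T)) * (2 * η)) + γ * (-f t)) t := by
    rw [hCfun]
    exact ((((((hasDerivAt_id t).sub_const T).const_mul K₁).add
      ((hE.sub_const 1).const_mul K₂)).add
      ((hE2.sub_const 1).const_mul K₃)).add (hI.const_mul γ))
  refine ⟨(1 + γ / η) * (Real.exp (η * (t - T)) * η) * Real.log x
      + -((1 + γ / η) * (Real.exp (η * (t - T)) * η)) * Real.log μbar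
      + (K₁ * 1 + K₂ * (Real.exp (η * (t - T)) * η)
        + K₃ * (Real.exp (2 * η * (t - T)) * (2 * η)) + γ * (-f t)),
    ((hA'.mul_const _).add (hB'.mul_const _)).add hC', ?_⟩
  -- the Gamma arguments agree
  have harg : 1 + η * A t / γ = ((γ + η) / γ) * Real.exp (η * (t - T)) := by
    rw [hA t]; field_simp; ring
  have hfg : f t = Real.log (Real.Gamma (1 + η * A t / γ)) := by
    rw [hf, harg]
  rw [← hfg, hB t, hA t, hK₁, hK₂, hK₃]
  have he2 : Real.exp (2 * η * (t - T)) = Real.exp (η * (t - T)) * Real.exp (η * (t - T)) := by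
    rw [← Real.exp_add]; ring_nf
  rw [he2]
  field_simp
  ring
end

section
/- Let η > 0, γ > 0, r₀ > 0, t, T ∈ ℝ, x > 0 and μ̄ > 0. Set α := ((γ+η)/γ)·e^{η(t−T)}, m := (γα/r₀ − 1)·μ̄, and for a > −1 define q(a) := γα(log x − log μ̄) + (γα − γ)·log(1+a) − r₀(x/μ̄)(1+a) − ((γα−γ)/μ̄)·m − γα·log(γ/r₀) − γ·log Γ(α) + (γα−γ)(γα/r₀ − 1). Then ∫_{−1}^{∞} exp(q(a)/γ) da = 1. (This is the MFG consistency/normalization condition ∫ exp(q_d^{MFG,*}(t,x,μ,a,π^{MFG,*})/γ) da = 1 for the paper's explicit decoupled Iq-function, where m equals the evaluated population term E_{μ,π^{MFG,*}}[ξ a^{π^{MFG,*}}].) -/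
open MeasureTheory Real

/-- MFG consistency/normalization condition for the explicit decoupled Iq-function of the
non-LQ jump-control example: `∫_{−1}^{∞} exp(q(a)/γ) da = 1`, where `q` is the decoupled
Iq-function evaluated at the MFE policy and `m = (γα/r₀ − 1)μ̄` is the evaluated
population term. -/
theorem mfg_iq_normalization (η γ r₀ t T x μbar : ℝ)
    (hη : 0 < η) (hγ : 0 < γ) (hr : 0 < r₀) (hx : 0 < x) (hμ : 0 < μbar)
    (α m : ℝ)
    (hα : α = ((γ + η) / γ) * Real.exp (η * (t - T)))
    (hm : m = (γ * α / r₀ - 1) * μbar)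
    (q : ℝ → ℝ)
    (hq : ∀ a, q a = γ * α * (Real.log x - Real.log μbar)
        + (γ * α - γ) * Real.log (1 + a) - r₀ * (x / μbar) * (1 + a)
        - ((γ * α - γ) / μbar) * m - γ * α * Real.log (γ / r₀)
        - γ * Real.log (Real.Gamma α) + (γ * α - γ) * (γ * α / r₀ - 1)) :
    ∫ a in Set.Ioi (-1 : ℝ), Real.exp (q a / γ) = 1 := by
  have hα0 : 0 < α := by
    rw [hα]; positivity
  have hΓ : 0 < Real.Gamma α := Real.Gamma_pos_of_pos hα0
  set β : ℝ := r₀ * (x / μbar) / γ with hβdef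
  have hβ : 0 < β := by positivity
  set C : ℝ := Real.exp (α * (Real.log x - Real.log μbar) - α * Real.log (γ / r₀))
      / Real.Gamma α with hCdef
  -- pointwise identity on Ioi (-1)
  have hpt : ∀ a ∈ Set.Ioi (-1 : ℝ),
      Real.exp (q a / γ) = C * ((a + 1) ^ (α - 1) * Real.exp (-(β * (a + 1)))) := by
    intro a ha
    have ha1 : (0:ℝ) < a + 1 := by
      have : (-1:ℝ) < a := ha
      linarith
    have hq' : q a / γ = ((α * (Real.log x - Real.log μbar) - α * Real.log (γ / r₀))
        - Real.log (Real.Gamma α)) + Real.log (a + 1) * (α - 1) + (-(β * (a + 1))) := by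
      rw [hq a, hm, hβdef, add_comm 1 a]
      field_simp
      ring
    rw [hq', Real.exp_add, Real.exp_add, Real.exp_sub, Real.exp_log hΓ, hCdef,
      ← Real.rpow_def_of_pos ha1]
    ring
  rw [setIntegral_congr_fun measurableSet_Ioi hpt]
  -- substitute u = a + 1
  have hshift : (∫ a in Set.Ioi (-1 : ℝ),
      C * ((a + 1) ^ (α - 1) * Real.exp (-(β * (a + 1)))))
      = ∫ u in Set.Ioi (0 : ℝ), C * (u ^ (α - 1) * Real.exp (-(β * u))) := by
    have hmp : MeasurePreserving (fun a : ℝ => a + 1) volume volume :=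
      measurePreserving_add_right volume 1
    have hemb : MeasurableEmbedding (fun a : ℝ => a + 1) :=
      (Homeomorph.addRight (1:ℝ)).measurableEmbedding
    have hpre : (fun a : ℝ => a + 1) ⁻¹' Set.Ioi (0:ℝ) = Set.Ioi (-1 : ℝ) := by
      ext a; simp only [Set.mem_preimage, Set.mem_Ioi]; constructor <;> intro h <;> linarith
    rw [← hpre]
    exact hmp.setIntegral_preimage_emb hemb
      (fun u => C * (u ^ (α - 1) * Real.exp (-(β * u)))) _
  rw [hshift, integral_const_mul, Real.integral_rpow_mul_exp_neg_mul_Ioi hα0 hβ]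
  -- final constant computation
  have h1β : (1 / β) ^ α = Real.exp (-(α * Real.log β)) := by
    rw [Real.rpow_def_of_pos (by positivity : (0:ℝ) < 1 / β), one_div, Real.log_inv]
    congr 1; ring
  have hlogβ : Real.log β = Real.log r₀ + (Real.log x - Real.log μbar) - Real.log γ := by
    rw [hβdef, Real.log_div (by positivity) (ne_of_gt hγ),
      Real.log_mul (ne_of_gt hr) (by positivity), Real.log_div (ne_of_gt hx) (ne_of_gt hμ)]
  have hlogγr : Real.log (γ / r₀) = Real.log γ - Real.log r₀ :=
    Real.log_div (ne_of_gt hγ) (ne_of_gt hr)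
  rw [hCdef, h1β, hlogβ, hlogγr]
  rw [div_mul_eq_mul_div, ← mul_assoc, ← Real.exp_add,
    show α * (Real.log x - Real.log μbar) - α * (Real.log γ - Real.log r₀)
      + -(α * (Real.log r₀ + (Real.log x - Real.log μbar) - Real.log γ)) = 0 by ring,
    Real.exp_zero, one_mul, div_self (ne_of_gt hΓ)]
end

section
/- Let η > 0, γ > 0, r₀ > 0, t, T ∈ ℝ, x > 0 and μ̄ > 0. Set α := ((γ+η)/γ)·e^{η(t−T)}, β := r₀x/(γμ̄), m := (γα/r₀ − 1)·μ̄, and for a > −1 define q(a) := γα(log x − log μ̄) + (γα − γ)·log(1+a) − r₀(x/μ̄)(1+a) − ((γα−γ)/μ̄)·m − γα·log(γ/r₀) − γ·log Γ(α) + (γα−γ)(γα/r₀ − 1). Then for every a > −1, exp(q(a)/γ) = (β^α/Γ(α))·(1+a)^{α−1}·e^{−β(1+a)}; that is, the Gibbs density exp(q(a)/γ) is exactly the density at a of the shifted Gamma distribution Gamma(α, r₀x/(γμ̄)) − 1, so q(a) = γ·log π^{MFG,*}(a|t,x,μ). (This verifies the fixed-point relation characterizing the MFE policy as the Gibbs measure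 of the decoupled Iq-function.) -/
open MeasureTheory Real

/-- Fixed-point relation characterizing the MFE policy as the Gibbs measure of the decoupled
Iq-function: for every `a > −1`,
`exp(q(a)/γ) = (β^α/Γ(α)) (1+a)^{α−1} e^{−β(1+a)}`, the density at `a` of the shifted Gamma
distribution `Gamma(α, r₀x/(γμ̄)) − 1`. -/
theorem mfg_gibbs_is_shifted_gamma (η γ r₀ t T x μbar : ℝ)
    (hη : 0 < η) (hγ : 0 < γ) (hr : 0 < r₀) (hx : 0 < x) (hμ : 0 < μbar)
    (α β m : ℝ)
    (hα : α = ((γ + η) / γ) * Real.exp (η * (t - T)))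
    (hβ : β = r₀ * x / (γ * μbar))
    (hm : m = (γ * α / r₀ - 1) * μbar)
    (q : ℝ → ℝ)
    (hq : ∀ a, q a = γ * α * (Real.log x - Real.log μbar)
        + (γ * α - γ) * Real.log (1 + a) - r₀ * (x / μbar) * (1 + a)
        - ((γ * α - γ) / μbar) * m - γ * α * Real.log (γ / r₀)
        - γ * Real.log (Real.Gamma α) + (γ * α - γ) * (γ * α / r₀ - 1)) :
    ∀ a : ℝ, -1 < a →
      Real.exp (q a / γ) =
        β ^ α / Real.Gamma α * (1 + a) ^ (α - 1) * Real.exp (-β * (1 + a)) := by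
  intro a ha
  have hα0 : 0 < α := by rw [hα]; positivity
  have hΓ : 0 < Real.Gamma α := Real.Gamma_pos_of_pos hα0
  have hβ0 : 0 < β := by rw [hβ]; positivity
  have h1a : 0 < 1 + a := by linarith
  have hlogβ : Real.log β = Real.log r₀ + Real.log x - Real.log γ - Real.log μbar := by
    rw [hβ, Real.log_div (by positivity) (by positivity), Real.log_mul hr.ne' hx.ne',
      Real.log_mul hγ.ne' hμ.ne']
    ring
  have hlogγr : Real.log (γ / r₀) = Real.log γ - Real.log r₀ := Real.log_div hγ.ne' hr.ne'
  rw [Real.rpow_def_of_pos hβ0, Real.rpow_def_of_pos h1a, ← Real.exp_log hΓ, ← Real.exp_sub, ← Real.exp_add, ← Real.exp_add]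
  congr 1
  rw [hq, hm, hlogβ, hlogγr, hβ]
  field_simp
  ring
end

section
/- Let η > 0, γ > 0, r₀ ≥ γ, σ ∈ ℝ and T ∈ ℝ. Define A(t) := (1+γ/η)·e^{η(t−T)} − γ/η, K₁′ := −γ(σ²/(2η) − 1), K₂′ := ((γ+η)/η)·(σ²/(2η) − 2 − log γ), K₃′ := (r₀−γ)/η, K₄′ := (γ+η)/η, and C(t) := K₁′(t−T) + K₂′(e^{η(t−T)} − 1) + K₃′·( log((γ+η)e^{η(t−T)} + r₀ − γ) − log(η+r₀) ) + K₄′·( e^{η(t−T)}·log((γ+η)e^{η(t−T)} + r₀ − γ) − log(r₀+η) ) + γ·∫_t^T log Γ(((γ+η)/γ)e^{η(s−T)}) ds. Then (γ+η)e^{η(t−T)} + r₀ − γ > 0 for all t, C(T) = 0, and C is differentiable at every t ∈ ℝ with C′(t) = −ηA(t) + σ²A(t)/2 − (γ+ηA(t))·log( γ/(r₀ + ηA(t)) ) − γ·log Γ(1 + ηA(t)/γ), where r₀ + ηA(t) = (γ+η)e^{η(t−T)} + r₀ − γ and 1 + ηA(t)/γ = ((γ+η)/γ)e^{η(t−T)}.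 -/
/-!
Differentiate `C` term by term, the integral by the fundamental theorem of calculus (its
integrand is continuous because `log ∘ Γ` is convex on `(0, ∞)`). Writing `e = e^{η(t−T)}` and
`P = r₀ + ηA(t) = (γ+η)e + r₀ − γ`, the two terms of `C'` with denominator `P` add up to
`(γ+η)e`, since `(r₀ − γ) + (γ+η)e = P`; what remains is the right-hand side of the ODE.
-/

open MeasureTheory Real intervalIntegral

open Set in
lemma Continuous.log_Gamma {f : ℝ → ℝ} (hf : Continuous f) (hpos : ∀ s, 0 < f s) :
    Continuous fun s => Real.log (Gamma (f s)) :=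
  (convexOn_log_Gamma.continuousOn isOpen_Ioi).comp_continuous hf hpos

lemma Continuous.hasDerivAt_integral_left {f : ℝ → ℝ} (hf : Continuous f) (b t : ℝ) :
    HasDerivAt (fun u => ∫ s in u..b, f s) (-f t) t :=
  integral_hasDerivAt_left (hf.intervalIntegrable t b) (hf.stronglyMeasurableAtFilter _ _)
    hf.continuousAt

noncomputable section

namespace JumpMFC

variable (η γ r₀ T : ℝ)

def E (t : ℝ) : ℝ := exp (η * (t - T))

/-- `r₀ + η A(t)`. -/
def P (t : ℝ) : ℝ := (γ + η) * E η T t + r₀ - γ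

def C (K₁ K₂ K₃ K₄ t : ℝ) : ℝ :=
  K₁ * (t - T) + K₂ * (E η T t - 1) + K₃ * (log (P η γ r₀ T t) - log (η + r₀))
    + K₄ * (E η T t * log (P η γ r₀ T t) - log (r₀ + η))
    + γ * ∫ s in t..T, log (Gamma ((γ + η) / γ * E η T s))

variable {η γ r₀ T}

lemma hasDerivAt_E (t : ℝ) : HasDerivAt (E η T) (η * E η T t) t := by
  unfold E
  simpa [mul_comm] using (((hasDerivAt_id t).sub_const T).const_mul η).exp

lemma continuous_E : Continuous (E η T) := by
  unfold E; fun_prop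

lemma hasDerivAt_P (t : ℝ) : HasDerivAt (P η γ r₀ T) ((γ + η) * (η * E η T t)) t :=
  (((hasDerivAt_E t).const_mul (γ + η)).add_const r₀).sub_const γ

lemma P_pos (hγη : 0 < γ + η) (hr : γ ≤ r₀) (t : ℝ) : 0 < P η γ r₀ T t := by
  have : 0 < (γ + η) * E η T t := mul_pos hγη (exp_pos _)
  unfold P; linarith

lemma C_self (K₁ K₂ K₃ K₄ : ℝ) : C η γ r₀ T K₁ K₂ K₃ K₄ T = 0 := by
  simp only [C, P, E, sub_self, mul_zero, exp_zero, one_mul, mul_one, integral_same]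
  ring_nf

lemma hasDerivAt_C (hΓ : 0 < (γ + η) / γ) (K₁ K₂ K₃ K₄ : ℝ) {t : ℝ} (hP : P η γ r₀ T t ≠ 0) :
    HasDerivAt (C η γ r₀ T K₁ K₂ K₃ K₄)
      (K₁ + K₂ * (η * E η T t)
        + K₃ * ((γ + η) * (η * E η T t) / P η γ r₀ T t)
        + K₄ * (η * E η T t * log (P η γ r₀ T t)
          + E η T t * ((γ + η) * (η * E η T t) / P η γ r₀ T t))
        + γ * -log (Gamma ((γ + η) / γ * E η T t))) t := by
  have hE : HasDerivAt (E η T) _ t := hasDerivAt_E t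
  have hlogP := (hasDerivAt_P t).log hP
  have hlogΓ : Continuous fun s => log (Gamma ((γ + η) / γ * E η T s)) :=
    (continuous_const.mul continuous_E).log_Gamma fun s => mul_pos hΓ (exp_pos _)
  have := (((((hasDerivAt_id t).sub_const T).const_mul K₁).add
    ((hE.sub_const 1).const_mul K₂)).add
    ((hlogP.sub_const (log (η + r₀))).const_mul K₃)).add
    (((hE.mul hlogP).sub_const (log (r₀ + η))).const_mul K₄) |>.add
    ((hlogΓ.hasDerivAt_integral_left T t).const_mul γ)
  rw [mul_one] at this
  exact this

lemma add_mul_A_eq {η γ r₀ e A : ℝ} (hη : η ≠ 0) (hA : A = (1 + γ / η) * e - γ / η) :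
    r₀ + η * A = (γ + η) * e + r₀ - γ := by
  rw [hA]; field_simp; ring

lemma one_add_mul_A_div_eq {η γ e A : ℝ} (hη : η ≠ 0) (hγ : γ ≠ 0)
    (hA : A = (1 + γ / η) * e - γ / η) : 1 + η * A / γ = (γ + η) / γ * e := by
  rw [hA]; field_simp; ring

lemma deriv_C_eq_ode_rhs {η γ r₀ σ e p A L : ℝ} (hη : η ≠ 0) (hγ : γ ≠ 0) (hp0 : p ≠ 0)
    (hp : p = (γ + η) * e + r₀ - γ) (hA : A = (1 + γ / η) * e - γ / η) :
    -γ * (σ ^ 2 / (2 * η) - 1) + (γ + η) / η * (σ ^ 2 / (2 * η) - 2 - log γ) * (η * e)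
      + (r₀ - γ) / η * ((γ + η) * (η * e) / p)
      + (γ + η) / η * (η * e * log p + e * ((γ + η) * (η * e) / p)) + γ * -L
      = -(η * A) + σ ^ 2 * A / 2 - (γ + η * A) * log (γ / p) - γ * L := by
  subst hp hA
  rw [log_div hγ hp0]
  field_simp
  ring

end JumpMFC

end

/-- Explicit solution of the ODE for `C` in the non-LQ MFC jump-control example:
`(γ+η)e^{η(t−T)} + r₀ − γ > 0` for all `t`, `C(T) = 0`, and `C` is differentiable with
`C′(t) = −ηA(t) + σ²A(t)/2 − (γ+ηA(t)) log(γ/(r₀+ηA(t))) − γ log Γ(1 + ηA(t)/γ)`, where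
`r₀ + ηA(t) = (γ+η)e^{η(t−T)} + r₀ − γ` and `1 + ηA(t)/γ = ((γ+η)/γ)e^{η(t−T)}`. -/
theorem mfc_ODE_solution (η γ r₀ σ T : ℝ) (hη : 0 < η) (hγ : 0 < γ) (hr : γ ≤ r₀)
    (A C : ℝ → ℝ) (K₁' K₂' K₃' K₄' : ℝ)
    (hA : ∀ t, A t = (1 + γ / η) * Real.exp (η * (t - T)) - γ / η)
    (hK₁ : K₁' = -γ * (σ ^ 2 / (2 * η) - 1))
    (hK₂ : K₂' = ((γ + η) / η) * (σ ^ 2 / (2 * η) - 2 - Real.log γ))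
    (hK₃ : K₃' = (r₀ - γ) / η)
    (hK₄ : K₄' = (γ + η) / η)
    (hC : ∀ t, C t = K₁' * (t - T) + K₂' * (Real.exp (η * (t - T)) - 1)
        + K₃' * (Real.log ((γ + η) * Real.exp (η * (t - T)) + r₀ - γ) - Real.log (η + r₀))
        + K₄' * (Real.exp (η * (t - T)) *
            Real.log ((γ + η) * Real.exp (η * (t - T)) + r₀ - γ) - Real.log (r₀ + η))
        + γ * ∫ s in t..T, Real.log (Real.Gamma (((γ + η) / γ) * Real.exp (η * (s - T))))) :
    (∀ t : ℝ, 0 < (γ + η) * Real.exp (η * (t - T)) + r₀ - γ) ∧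
    C T = 0 ∧
    ∀ t : ℝ,
      HasDerivAt C (-(η * A t) + σ ^ 2 * A t / 2
        - (γ + η * A t) * Real.log (γ / (r₀ + η * A t))
        - γ * Real.log (Real.Gamma (1 + η * A t / γ))) t ∧
      r₀ + η * A t = (γ + η) * Real.exp (η * (t - T)) + r₀ - γ ∧
      1 + η * A t / γ = ((γ + η) / γ) * Real.exp (η * (t - T)) := by
  have hCeq : C = JumpMFC.C η γ r₀ T K₁' K₂' K₃' K₄' := funext hC
  have hP := JumpMFC.P_pos (T := T) (add_pos hγ hη) hr
  refine ⟨hP, hCeq ▸ JumpMFC.C_self .., fun t => ?_⟩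
  have hrA := JumpMFC.add_mul_A_eq (r₀ := r₀) hη.ne' (hA t)
  have hoA := JumpMFC.one_add_mul_A_div_eq hη.ne' hγ.ne' (hA t)
  refine ⟨?_, hrA, hoA⟩
  rw [hCeq, hrA, hoA]
  subst hK₁ hK₂ hK₃ hK₄
  exact (JumpMFC.hasDerivAt_C (div_pos (add_pos hγ hη) hγ) _ _ _ _ (hP t).ne').congr_deriv <|
    JumpMFC.deriv_C_eq_ode_rhs hη.ne' hγ.ne' (hP t).ne' rfl (hA t)
end

section
/- Let η > 0, γ > 0, r₀ ≥ γ, t, T ∈ ℝ, x > 0 and μ̄ > 0. Set α := ((γ+η)/γ)·e^{η(t−T)}, β := (r₀ − γ + γα)·x/(γμ̄), m := (γα/(r₀−γ+γα) − 1)·μ̄, and let p(a) := (β^α/Γ(α))·(1+a)^{α−1}·e^{−β(1+a)} for a > −1 be the density of the shifted Gamma policy Gamma(α, β) − 1. For a > −1 define q(a) := γα(log x − log μ̄) + (γα − γ)·log(1+a) − r₀(x/μ̄)(1+a) − ((γα−γ)/μ̄)·m − (1 + log γ)·γα + γ − γ·log Γ(α) + γα·log(γα + r₀ − γ). Then ∫_{−1}^{∞}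 ( q(a) − γ·log p(a) ) · p(a) da = 0. (This is the MFC consistency condition ∫(q_d^{MFC,*}(t,x,μ,a,π^{MFC,*}) − γ log π^{MFC,*}(a|t,x,μ)) π^{MFC,*}(a|t,x,μ) da = 0 for the paper's explicit decoupled Iq-function, where m equals the evaluated population term E_{μ,π^{MFC,*}}[ξ a^{π^{MFC,*}}].) -/
/-!
Since `log p(a) = α log β − log Γ(α) + (α − 1) log(1 + a) − β (1 + a)` and the coefficient
`γα − γ` of `log(1 + a)` in `q` is exactly `γ (α − 1)`, the integrand `q − γ log p` is affine in
`1 + a`. Its integral against the shifted Gamma density is therefore determined by the mass `1`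
and the mean `α / β` of `Gamma(α, β)`, and with the explicit `β` and `m` the result cancels to `0`.
-/

open MeasureTheory Real Set

theorem integral_comp_add_left_Ioi {E : Type*} [NormedAddCommGroup E] [NormedSpace ℝ E]
    (f : ℝ → E) (a d : ℝ) :
    ∫ x in Ioi a, f (d + x) = ∫ x in Ioi (d + a), f x := by
  have hpre : (d + ·) ⁻¹' Ioi (d + a) = Ioi a := by
    ext x; simp
  simpa [hpre] using (measurePreserving_add_left (volume : Measure ℝ) d).setIntegral_preimage_emb
    (MeasurableEquiv.addLeft d).measurableEmbedding f (Ioi (d + a))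

/-- Mathlib's `ProbabilityTheory.gammaPDFReal` without the indicator of `[0, ∞)`. -/
noncomputable def gammaDensity (α β z : ℝ) : ℝ :=
  β ^ α / Gamma α * z ^ (α - 1) * exp (-β * z)

section GammaDensity

variable {α β : ℝ}

theorem integral_gammaDensity_Ioi (hα : 0 < α) (hβ : 0 < β) :
    ∫ z in Ioi 0, gammaDensity α β z = 1 := by
  have hΓ : Gamma α ≠ 0 := (Gamma_pos_of_pos hα).ne'
  simp only [gammaDensity, mul_assoc, neg_mul]
  rw [integral_const_mul, integral_rpow_mul_exp_neg_mul_Ioi hα hβ, one_div,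
    inv_rpow hβ.le]
  field_simp

theorem integrableOn_gammaDensity_Ioi (hα : 0 < α) (hβ : 0 < β) :
    IntegrableOn (gammaDensity α β) (Ioi 0) :=
  .of_integral_ne_zero (by rw [integral_gammaDensity_Ioi hα hβ]; exact one_ne_zero)

theorem mul_gammaDensity (hα : 0 < α) (hβ : 0 < β) {z : ℝ} (hz : 0 < z) :
    z * gammaDensity α β z = α / β * gammaDensity (α + 1) β z := by
  simp only [gammaDensity]
  rw [Gamma_add_one hα.ne', rpow_add hβ, rpow_one, add_sub_cancel_right,
    rpow_sub_one hz.ne' α]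
  field_simp

theorem integral_affine_mul_gammaDensity_Ioi (hα : 0 < α) (hβ : 0 < β) (c₀ c₁ : ℝ) :
    ∫ z in Ioi 0, (c₀ + c₁ * z) * gammaDensity α β z = c₀ + c₁ * (α / β) := by
  have hmean : ∫ z in Ioi 0, z * gammaDensity α β z = α / β := by
    rw [setIntegral_congr_fun measurableSet_Ioi fun z hz => mul_gammaDensity hα hβ hz,
      integral_const_mul, integral_gammaDensity_Ioi (by linarith) hβ, mul_one]
  have hmean_integrable : IntegrableOn (fun z => z * gammaDensity α β z) (Ioi 0) :=
    .of_integral_ne_zero (by rw [hmean]; positivity)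
  simp only [add_mul, mul_assoc]
  rw [integral_add ((integrableOn_gammaDensity_Ioi hα hβ).const_mul c₀)
      (hmean_integrable.const_mul c₁), integral_const_mul, integral_const_mul,
    integral_gammaDensity_Ioi hα hβ, hmean, mul_one]

theorem log_gammaDensity {z : ℝ} (hα : 0 < α) (hβ : 0 < β) (hz : 0 < z) :
    log (gammaDensity α β z) = α * log β - log (Gamma α) + (α - 1) * log z - β * z := by
  rw [gammaDensity, log_mul (by positivity) (exp_pos _).ne',
    log_mul (by positivity) (by positivity), log_div (by positivity) (Gamma_pos_of_pos hα).ne',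
    log_rpow hβ, log_rpow hz, log_exp]
  ring

end GammaDensity

/-- MFC consistency condition for the explicit decoupled Iq-function of the non-LQ
jump-control example:
`∫_{−1}^{∞} (q(a) − γ log p(a)) p(a) da = 0`, where `p` is the density of the shifted Gamma
optimal policy `Gamma(α, β) − 1` and `m = (γα/(r₀−γ+γα) − 1)μ̄` is the evaluated population
term. -/
theorem mfc_consistency_condition (η γ r₀ t T x μbar : ℝ)
    (hη : 0 < η) (hγ : 0 < γ) (hr : γ ≤ r₀) (hx : 0 < x) (hμ : 0 < μbar)
    (α β m : ℝ)
    (hα : α = ((γ + η) / γ) * Real.exp (η * (t - T)))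
    (hβ : β = (r₀ - γ + γ * α) * x / (γ * μbar))
    (hm : m = (γ * α / (r₀ - γ + γ * α) - 1) * μbar)
    (p q : ℝ → ℝ)
    (hp : ∀ a, p a = β ^ α / Real.Gamma α * (1 + a) ^ (α - 1) * Real.exp (-β * (1 + a)))
    (hq : ∀ a, q a = γ * α * (Real.log x - Real.log μbar)
        + (γ * α - γ) * Real.log (1 + a) - r₀ * (x / μbar) * (1 + a)
        - ((γ * α - γ) / μbar) * m - (1 + Real.log γ) * (γ * α) + γ
        - γ * Real.log (Real.Gamma α) + γ * α * Real.log (γ * α + r₀ - γ)) :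
    ∫ a in Set.Ioi (-1 : ℝ), (q a - γ * Real.log (p a)) * p a = 0 := by
  have hα0 : 0 < α := by rw [hα]; positivity
  set K := r₀ - γ + γ * α with hK_def
  have hK : 0 < K := by nlinarith [mul_pos hγ hα0]
  have hβ0 : 0 < β := by rw [hβ]; positivity
  have hp' : ∀ a, p a = gammaDensity α β (1 + a) := hp
  have hlogβ : log β = log K + log x - log γ - log μbar := by
    rw [hβ, log_div (by positivity) (by positivity), log_mul hK.ne' hx.ne',
      log_mul hγ.ne' hμ.ne']
    ring
  -- every logarithm cancels: `log (1 + a)` against the entropy term, the constants via `hlogβ`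
  set c₀ := γ - γ * α - (γ * α - γ) / μbar * m with hc₀
  set c₁ := γ * β - r₀ * (x / μbar) with hc₁
  calc ∫ a in Ioi (-1 : ℝ), (q a - γ * log (p a)) * p a
      = ∫ a in Ioi (-1 : ℝ), (c₀ + c₁ * (1 + a)) * gammaDensity α β (1 + a) :=
        setIntegral_congr_fun measurableSet_Ioi fun a ha => by
          have h1a : 0 < 1 + a := neg_lt_iff_pos_add'.mp ha
          rw [hp', hq, log_gammaDensity hα0 hβ0 h1a, hlogβ, show γ * α + r₀ - γ = K by ring]
          ring
    _ = ∫ z in Ioi 0, (c₀ + c₁ * z) * gammaDensity α β z := by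
        rw [integral_comp_add_left_Ioi (fun z => (c₀ + c₁ * z) * gammaDensity α β z)]
        norm_num
    _ = c₀ + c₁ * (α / β) := integral_affine_mul_gammaDensity_Ioi hα0 hβ0 c₀ c₁
    _ = 0 := by
        rw [hc₀, hc₁, hm, hβ]
        field_simp
        rw [hK_def]
        ring
end
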